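/- arXiv:1612.07928 — 7 statements merged into one kernel-verified Lean document; each statement's English description precedes it below -/
import Mathlib

section
/- Let g ∈ F_q[X] be a monic irreducible polynomial of degree n over the finite field F_q that is not primitive, let β ∈ F_{q^n} be a root of g of multiplicative order e, and let t = (q^n − 1)/e. Then the number of monic primitive polynomials of degree n over F_q having a root α ∈ F_{q^n} with α^t = β equals φ(q^n − 1)/φ(e), where φ is Euler's totient function. -/
open Polynomial

/-- The (left) shift operator `L` on sequences over `F`, as an `F`-linear endomorphism. -/
def shiftL (F : Type*) [CommSemiring F] : Module.End F (ℕ → F) where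
  toFun s := fun i => s (i + 1)
  map_add' _ _ := rfl
  map_smul' _ _ := rfl

/-- For a polynomial `f`, the operator `f(L)` on sequences. -/
noncomputable def polyL {F : Type*} [CommSemiring F] (f : Polynomial F) :
    Module.End F (ℕ → F) :=
  Polynomial.aeval (shiftL F) f

/-- `Ω(f)`: the set of sequences annihilated by `f(L)`. -/
def OmegaSet {F : Type*} [CommSemiring F] (f : Polynomial F) : Set (ℕ → F) :=
  {s | polyL f s = 0}

/-- Two sequences are shift equivalent if one is a shift of the other. -/
def ShiftEquiv {F : Type*} [CommSemiring F] (s s' : ℕ → F) : Prop :=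
  ∃ ℓ : ℕ, s' = (shiftL F ^ ℓ) s

/-- The cycle (shift-equivalence class) of a sequence. -/
def seqCycle {F : Type*} [CommSemiring F] (s : ℕ → F) : Set (ℕ → F) :=
  {s' | ∃ ℓ : ℕ, s' = (shiftL F ^ ℓ) s}

/-- `N` is the least period of the sequence `s`. -/
def IsLeastPeriod {F : Type*} (s : ℕ → F) (N : ℕ) : Prop :=
  0 < N ∧ (∀ i, s (i + N) = s i) ∧ ∀ M : ℕ, 0 < M → (∀ i, s (i + M) = s i) → N ≤ M

/-- `h` is the minimal polynomial of the sequence `s`: it is monic, annihilates `s`,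
and divides every polynomial annihilating `s`. -/
def IsMinPolyOfSeq {F : Type*} [CommSemiring F] (s : ℕ → F) (h : Polynomial F) : Prop :=
  h.Monic ∧ polyL h s = 0 ∧ ∀ h' : Polynomial F, polyL h' s = 0 → h ∣ h'

/-- `e = ord(f)`: the least `N ≥ 1` with `f ∣ X^N - 1`. -/
def IsOrderOf {F : Type*} [CommRing F] (f : Polynomial F) (e : ℕ) : Prop :=
  0 < e ∧ f ∣ X ^ e - 1 ∧ ∀ N : ℕ, 0 < N → f ∣ X ^ N - 1 → e ≤ N

/-!
A generator `α` of `Eˣ` is determined by its minimal polynomial together with `α ^ t = β`: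
a Galois automorphism sending one such `α` to another fixes `β`, which generates `E` over `F`,
so it is the identity. The count thus takes place in the cyclic group `Eˣ` of order `e * t`.
The `t`-th power map sends its `φ(e * t)` generators onto the `φ(e)` elements of order `e`, and
all fibres have the same size, since two elements of the same order differ by a power map
`x ↦ x ^ k` with `k` prime to the group order, which permutes the generators.
-/

open IntermediateField

theorem Nat.exists_coprime_modEq_of_dvd {e Q k : ℕ} (hQ : Q ≠ 0) (he : e ∣ Q)
    (hk : k.Coprime e) : ∃ k', k'.Coprime Q ∧ k' ≡ k [MOD e] := by
  have : NeZero Q := ⟨hQ⟩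
  obtain ⟨u, hu⟩ := ZMod.unitsMap_surjective he (ZMod.unitOfCoprime k hk)
  refine ⟨(u : ZMod Q).val, ZMod.val_coe_unit_coprime u, ?_⟩
  rw [← ZMod.natCast_eq_natCast_iff, ZMod.natCast_val, ← ZMod.unitsMap_val he, hu,
    ZMod.coe_unitOfCoprime]

section CyclicGroup

open Finset

variable {G : Type*} [Group G]

theorem IsCyclic.exists_pow_eq_of_orderOf_dvd [Finite G] [IsCyclic G] {x y : G}
    (h : orderOf x ∣ orderOf y) : ∃ i, y ^ i = x := by
  classical
  have := Fintype.ofFinite G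
  -- In a cyclic group at most `orderOf y` elements are killed by `orderOf y`, and the powers of
  -- `y` already give that many.
  let roots : Finset G := {a | a ^ orderOf y = 1}
  have hsub : (range (orderOf y)).image (y ^ ·) ⊆ roots := by
    intro a ha
    obtain ⟨i, -, rfl⟩ := mem_image.mp ha
    simp [roots, pow_right_comm y i, pow_orderOf_eq_one]
  have hcard : #roots ≤ #((range (orderOf y)).image (y ^ ·)) := by
    rw [card_image_of_injOn (by simpa using pow_injOn_Iio_orderOf), card_range]
    exact IsCyclic.card_pow_eq_one_le (orderOf_pos y)
  have hx : x ∈ roots := by simp [roots, orderOf_dvd_iff_pow_eq_one.mp h]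
  rw [← eq_of_subset_of_card_le hsub hcard] at hx
  obtain ⟨i, -, hi⟩ := mem_image.mp hx
  exact ⟨i, hi⟩

theorem IsCyclic.exists_coprime_pow_eq_of_orderOf_eq [Finite G] [IsCyclic G] {x y : G}
    (h : orderOf x = orderOf y) : ∃ k, (Nat.card G).Coprime k ∧ y ^ k = x := by
  obtain ⟨i, rfl⟩ := exists_pow_eq_of_orderOf_dvd h.dvd
  have hi : i.Coprime (orderOf y) := by
    rw [orderOf_pow, Nat.div_eq_self] at h
    exact Nat.Coprime.symm (h.resolve_left (orderOf_pos y).ne')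
  obtain ⟨k, hk, hki⟩ := Nat.exists_coprime_modEq_of_dvd Nat.card_pos.ne' (orderOf_dvd_natCard y) hi
  exact ⟨k, hk.symm, pow_eq_pow_iff_modEq.mpr hki⟩

theorem ncard_orderOf_eq_and_pow_eq_pow_coprime {k : ℕ} (hk : (Nat.card G).Coprime k)
    (d t : ℕ) (β : G) :
    {α : G | orderOf α = d ∧ α ^ t = β ^ k}.ncard = {α : G | orderOf α = d ∧ α ^ t = β}.ncard := by
  rw [← Nat.card_coe_set_eq, ← Nat.card_coe_set_eq]
  refine Nat.card_congr ((powCoprime hk).subtypeEquiv fun α => ?_).symm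
  have hα : (orderOf α).Coprime k := hk.coprime_dvd_left (orderOf_dvd_natCard α)
  simp only [Set.mem_ofPred_eq, powCoprime_apply, hα.orderOf_pow, pow_right_comm α k t,
    (hk.pow_left_bijective).injective.eq_iff]

theorem IsCyclic.ncard_orderOf_eq_card_and_pow_eq [Finite G] [IsCyclic G] (β : G) {t : ℕ}
    (ht : orderOf β * t = Nat.card G) :
    {α : G | orderOf α = Nat.card G ∧ α ^ t = β}.ncard
      = (Nat.card G).totient / (orderOf β).totient := by
  classical
  have := Fintype.ofFinite G
  rw [Nat.card_eq_fintype_card] at ht ⊢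
  have hfiber : ∀ x ∈ ({x | orderOf x = orderOf β} : Finset G),
      #{α | orderOf α = Fintype.card G ∧ α ^ t = x}
        = {α : G | orderOf α = Fintype.card G ∧ α ^ t = β}.ncard := by
    intro x hx
    obtain ⟨k, hk, rfl⟩ := exists_coprime_pow_eq_of_orderOf_eq ((mem_filter_univ x).mp hx)
    rw [← ncard_orderOf_eq_and_pow_eq_pow_coprime hk, Set.ncard_eq_toFinset_card',
      Set.toFinset_ofPred]
  have hmaps : ∀ α ∈ ({α | orderOf α = Fintype.card G} : Finset G),
      α ^ t ∈ ({x | orderOf x = orderOf β} : Finset G) := by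
    intro α hα
    rw [mem_filter_univ] at hα ⊢
    rw [orderOf_pow, hα, ← ht, Nat.gcd_mul_left_left, Nat.mul_div_cancel _ (Nat.pos_of_ne_zero ?_)]
    rintro rfl
    exact Fintype.card_ne_zero (by rw [← ht, mul_zero])
  have hsum := card_eq_sum_card_fiberwise hmaps
  simp only [filter_filter] at hsum
  rw [sum_congr rfl hfiber, sum_const, smul_eq_mul,
    IsCyclic.card_orderOf_eq_totient dvd_rfl,
    IsCyclic.card_orderOf_eq_totient ⟨t, ht.symm⟩] at hsum
  rw [hsum, Nat.mul_div_cancel_left _ (Nat.totient_pos.mpr (orderOf_pos β))]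

end CyclicGroup

section FieldTheory

variable {F E : Type*} [Field F] [Field E] [Algebra F E]

theorem adjoin_simple_eq_top_of_orderOf_eq_card [Finite E] {α : Eˣ}
    (hα : orderOf α = Nat.card Eˣ) : F⟮(α : E)⟯ = ⊤ := by
  have hgen : Subgroup.zpowers α = ⊤ := Subgroup.eq_top_of_card_eq _ (by rw [Nat.card_zpowers, hα])
  rw [eq_top_iff]
  rintro x -
  rcases eq_or_ne x 0 with rfl | hx
  · exact zero_mem _
  obtain ⟨k, hk⟩ := Subgroup.mem_zpowers_iff.mp (hgen ▸ Subgroup.mem_top (Units.mk0 x hx))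
  rw [← Units.val_mk0 hx, ← hk, Units.val_zpow_eq_zpow_val]
  exact zpow_mem (mem_adjoin_simple_self F (α : E)) k

theorem eq_of_minpoly_eq_of_pow_eq [Normal F E] {α α' b : E} (hb : F⟮b⟯ = ⊤) {t : ℕ}
    (hα : α ^ t = b) (hα' : α' ^ t = b) (h : minpoly F α = minpoly F α') : α = α' := by
  obtain ⟨σ, hσ : σ α' = α⟩ := (Normal.minpoly_eq_iff_mem_orbit E).mp h
  have hσb : σ b = b := by
    rw [← hα', map_pow, hσ, hα, hα']
  have hadj : Algebra.adjoin F {b} = ⊤ := by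
    rw [← adjoin_simple_toSubalgebra_of_isAlgebraic (Algebra.IsAlgebraic.isAlgebraic b), hb,
      top_toSubalgebra]
  have hσ1 : (σ : E →ₐ[F] E) = AlgHom.id F E :=
    AlgHom.ext_of_adjoin_eq_top hadj (by simpa using hσb)
  rw [← hσ]
  exact DFunLike.congr_fun hσ1 α'

theorem ncard_minpoly_of_orderOf_eq_card_and_pow_eq [Finite E] {b : Eˣ} (hb : F⟮(b : E)⟯ = ⊤)
    (t : ℕ) :
    {q : F[X] | q.Monic ∧ q.natDegree = Module.finrank F E ∧
        ∃ α : Eˣ, orderOf α = Nat.card Eˣ ∧ minpoly F (α : E) = q ∧ α ^ t = b}.ncard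
      = {α : Eˣ | orderOf α = Nat.card Eˣ ∧ α ^ t = b}.ncard := by
  have himage : {q : F[X] | q.Monic ∧ q.natDegree = Module.finrank F E ∧
      ∃ α : Eˣ, orderOf α = Nat.card Eˣ ∧ minpoly F (α : E) = q ∧ α ^ t = b}
      = (fun α : Eˣ => minpoly F (α : E)) '' {α | orderOf α = Nat.card Eˣ ∧ α ^ t = b} := by
    ext q
    constructor
    · rintro ⟨-, -, α, hα, rfl, hαt⟩
      exact ⟨α, ⟨hα, hαt⟩, rfl⟩
    · rintro ⟨α, ⟨hα, hαt⟩, rfl⟩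
      exact ⟨minpoly.monic (.of_finite F _), (Field.primitive_element_iff_minpoly_natDegree_eq F _).mp
        (adjoin_simple_eq_top_of_orderOf_eq_card hα), α, hα, rfl, hαt⟩
  have hinj : Set.InjOn (fun α : Eˣ => minpoly F (α : E))
      {α | orderOf α = Nat.card Eˣ ∧ α ^ t = b} := by
    rintro α ⟨-, hαt⟩ α' ⟨-, hα't⟩ h
    exact Units.ext (eq_of_minpoly_eq_of_pow_eq hb (by rw [← Units.val_pow_eq_pow_val, hαt])
      (by rw [← Units.val_pow_eq_pow_val, hα't]) h)
  rw [himage, hinj.ncard_image]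

end FieldTheory

theorem stmt0_general {F E : Type*} [Field F] [Fintype F] [Field E] [Fintype E] [Algebra F E]
    (n : ℕ) (hcard : Fintype.card E = Fintype.card F ^ n)
    (g : Polynomial F) (hmonic : g.Monic) (hirr : Irreducible g) (hdeg : g.natDegree = n)
    (β : Eˣ) (hroot : Polynomial.aeval (β : E) g = 0)
    (e : ℕ) (he : e = orderOf β)
    (t : ℕ) (ht : t = (Fintype.card F ^ n - 1) / e) :
    {q : Polynomial F | q.Monic ∧ q.natDegree = n ∧
        ∃ α : Eˣ, orderOf α = Fintype.card F ^ n - 1 ∧ minpoly F (α : E) = q ∧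
          α ^ t = β}.ncard
      = Nat.totient (Fintype.card F ^ n - 1) / Nat.totient e := by
  subst he ht
  have hunits : Nat.card Eˣ = Fintype.card F ^ n - 1 := by
    rw [Nat.card_units, Nat.card_eq_fintype_card, hcard]
  have hfinrank : Module.finrank F E = n := by
    have hpow := Module.card_eq_pow_finrank (K := F) (V := E)
    rw [hcard] at hpow
    exact (Nat.pow_right_injective Fintype.one_lt_card hpow).symm
  have hβ : F⟮(β : E)⟯ = ⊤ := by
    rw [Field.primitive_element_iff_minpoly_natDegree_eq,
      ← minpoly.eq_of_irreducible_of_monic hirr hroot hmonic, hdeg, hfinrank]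
  rw [← hunits, ← hfinrank, ncard_minpoly_of_orderOf_eq_card_and_pow_eq hβ]
  exact IsCyclic.ncard_orderOf_eq_card_and_pow_eq β (Nat.mul_div_cancel' (orderOf_dvd_natCard β))

/-- the number of monic primitive polynomials of degree `n` over `F_q`
having a root `α` with `α^t = β` equals `φ(q^n − 1)/φ(e)`. -/
theorem stmt0 {F E : Type*} [Field F] [Fintype F] [Field E] [Fintype E] [Algebra F E]
    (n : ℕ) (hn : 0 < n) (hcard : Fintype.card E = Fintype.card F ^ n)
    (g : Polynomial F) (hmonic : g.Monic) (hirr : Irreducible g) (hdeg : g.natDegree = n)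
    (β : Eˣ) (hroot : Polynomial.aeval (β : E) g = 0)
    (e : ℕ) (he : e = orderOf β)
    (hnotprim : e ≠ Fintype.card F ^ n - 1)
    (t : ℕ) (ht : t = (Fintype.card F ^ n - 1) / e) :
    {q : Polynomial F | q.Monic ∧ q.natDegree = n ∧
        ∃ α : Eˣ, orderOf α = Fintype.card F ^ n - 1 ∧ minpoly F (α : E) = q ∧
          α ^ t = β}.ncard
      = Nat.totient (Fintype.card F ^ n - 1) / Nat.totient e :=
  stmt0_general n hcard g hmonic hirr hdeg β hroot e he t ht
end

section
/- Let g_1, …, g_k be pairwise distinct monic irreducible polynomials in F_q[X] with g_i(0) ≠ 0, let b_1, …, b_k ≥ 1, and let s = s_1 + s_2 + ⋯ + s_k where s_i ∈ Ω(g_i^{b_i}) has least period e_i (with the least period of the zero sequence taken to be 1). Then the least period of s equals lcm(e_1, e_2, …, e_k). -/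
open Polynomial

open Function

/-! Every period of a sequence is a multiple of its least period, so the least period of
`s = ∑ sᵢ` is `lcm eᵢ` as soon as every period `M` of `s` is a period of each `sᵢ`. This holds
because `(X^M - 1)(L)` maps `sᵢ` into `Ω(gᵢ^{bᵢ})`, the polynomials `gᵢ^{bᵢ}` are pairwise
coprime, and sequences annihilated by pairwise coprime polynomials are linearly independent. -/

section LeastPeriod

variable {α : Type*}

theorem IsLeastPeriod.periodic {s : ℕ → α} {N : ℕ} (h : IsLeastPeriod s N) : Periodic s N :=
  h.2.1

theorem IsLeastPeriod.dvd_of_periodic {s : ℕ → α} {N M : ℕ} (hN : IsLeastPeriod s N)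
    (hM : Periodic s M) : N ∣ M := by
  have hmod : Periodic s (M % N) := fun i => by
    rw [← hN.periodic.nat_mul (M / N) (i + M % N), Nat.cast_id, add_assoc, Nat.mod_add_div', hM]
  by_contra hndvd
  have hpos : 0 < M % N := Nat.pos_of_ne_zero fun h => hndvd (Nat.dvd_of_mod_eq_zero h)
  exact absurd (hN.2.2 _ hpos hmod) (not_le.2 (Nat.mod_lt M hN.1))

theorem isLeastPeriod_sum_lcm [AddCommMonoid α] {ι : Type*} [Fintype ι] (s : ι → ℕ → α)
    (e : ι → ℕ) (he : ∀ i, IsLeastPeriod (s i) (e i))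
    (hsplit : ∀ M, Periodic (∑ i, s i) M → ∀ i, Periodic (s i) M) :
    IsLeastPeriod (∑ i, s i) (Finset.univ.lcm e) := by
  have hlcm_pos : 0 < Finset.univ.lcm e := Nat.pos_of_ne_zero fun h0 => by
    obtain ⟨i, -, hi⟩ := Finset.lcm_eq_zero_iff.1 h0
    exact (he i).1.ne' hi
  refine ⟨hlcm_pos, fun n => ?_, fun M hM hper => ?_⟩
  · simp only [Finset.sum_apply]
    refine Finset.sum_congr rfl fun i _ => ?_
    obtain ⟨c, hc⟩ := Finset.dvd_lcm (s := Finset.univ) (f := e) (Finset.mem_univ i)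
    rw [hc, mul_comm]
    exact (he i).periodic.nat_mul c n
  · exact Nat.le_of_dvd hM <| Finset.lcm_dvd fun i _ => (he i).dvd_of_periodic (hsplit M hper i)

end LeastPeriod

theorem eq_zero_of_sum_eq_zero_of_pairwise_isCoprime {R M ι : Type*} [CommRing R]
    [AddCommGroup M] [Module R M] [Fintype ι] [DecidableEq ι] (φ : Module.End R M)
    {f : ι → R[X]} (hcop : Pairwise (IsCoprime on f)) {t : ι → M}
    (ht : ∀ i, aeval φ (f i) (t i) = 0) (hsum : ∑ i, t i = 0) (j : ι) : t j = 0 := by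
  set P := ∏ i ∈ Finset.univ.erase j, f i
  have hcopP : IsCoprime (f j) P :=
    IsCoprime.prod_right fun i hi => hcop (Finset.ne_of_mem_erase hi).symm
  have hPt : aeval φ P (t j) = 0 := by
    rw [eq_neg_of_add_eq_zero_left ((Finset.add_sum_erase _ t (Finset.mem_univ j)).trans hsum),
      map_neg, map_sum, neg_eq_zero]
    refine Finset.sum_eq_zero fun i hi => ?_
    obtain ⟨d, hd⟩ : f i ∣ P := Finset.dvd_prod_of_mem f hi
    rw [hd, mul_comm, aeval_mul, Module.End.mul_apply, ht i, map_zero]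
  exact (Submodule.disjoint_def.1 (disjoint_ker_aeval_of_isCoprime φ hcopP)) _ (ht j) hPt

section Shift

variable {F : Type*} [CommRing F]

theorem shiftL_pow_apply (N : ℕ) (s : ℕ → F) : (shiftL F ^ N) s = fun i => s (i + N) := by
  induction N with
  | zero => rfl
  | succ n ih =>
    rw [pow_succ', Module.End.mul_apply, ih]
    funext i
    exact congrArg s (by omega)

theorem polyL_mul_apply (p q : F[X]) (s : ℕ → F) : polyL (p * q) s = polyL p (polyL q s) := by
  rw [polyL, aeval_mul, Module.End.mul_apply]
  rfl

theorem polyL_X_pow_sub_one_eq_zero_iff (N : ℕ) (s : ℕ → F) :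
    polyL (X ^ N - 1 : F[X]) s = 0 ↔ Periodic s N := by
  simp only [polyL, map_sub, map_pow, map_one, aeval_X, LinearMap.sub_apply,
    Module.End.one_apply, shiftL_pow_apply, sub_eq_zero, funext_iff, Periodic]

theorem periodic_of_periodic_sum {ι : Type*} [Fintype ι] [DecidableEq ι] {f : ι → F[X]}
    (hcop : Pairwise (IsCoprime on f)) {s : ι → ℕ → F} (hs : ∀ i, polyL (f i) (s i) = 0)
    {M : ℕ} (hM : Periodic (∑ i, s i) M) (i : ι) : Periodic (s i) M := by
  rw [← polyL_X_pow_sub_one_eq_zero_iff] at hM ⊢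
  refine eq_zero_of_sum_eq_zero_of_pairwise_isCoprime (shiftL F) hcop
    (t := fun j => polyL (X ^ M - 1 : F[X]) (s j)) (fun j => ?_) (by rw [← map_sum, hM]) i
  change polyL (f j) (polyL _ (s j)) = 0
  rw [← polyL_mul_apply, mul_comm, polyL_mul_apply, hs j, map_zero]

end Shift

theorem pairwise_isCoprime_pow_of_injective {K ι : Type*} [Field K] {g : ι → K[X]}
    (hmonic : ∀ i, (g i).Monic) (hirr : ∀ i, Irreducible (g i)) (hdist : Injective g)
    (b : ι → ℕ) : Pairwise (IsCoprime on fun i => g i ^ b i) := fun i j hij => by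
  refine IsCoprime.pow ((hirr i).isCoprime_or_dvd (g j) |>.resolve_right fun hdvd => hij ?_)
  exact hdist (eq_of_monic_of_associated (hmonic i) (hmonic j)
    ((hirr i).associated_of_dvd (hirr j) hdvd))

theorem stmt3_general {F : Type*} [Field F] (k : ℕ)
    (g : Fin k → Polynomial F) (b : Fin k → ℕ)
    (hmonic : ∀ i, (g i).Monic) (hirr : ∀ i, Irreducible (g i))
    (hdist : Function.Injective g)
    (s : Fin k → (ℕ → F)) (hs : ∀ i, s i ∈ OmegaSet ((g i) ^ (b i)))
    (e : Fin k → ℕ) (he : ∀ i, IsLeastPeriod (s i) (e i)) :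
    IsLeastPeriod (∑ i, s i) (Finset.univ.lcm e) :=
  isLeastPeriod_sum_lcm s e he fun _ hM =>
    periodic_of_periodic_sum (pairwise_isCoprime_pow_of_injective hmonic hirr hdist b) hs hM

/-- if `s = s₁ + ⋯ + s_k` with `sᵢ ∈ Ω(gᵢ^{bᵢ})` of least period `eᵢ`
(the least period of the zero sequence being `1`), then the least period of `s`
is `lcm(e₁, …, e_k)`. -/
theorem stmt3 {F : Type*} [Field F] [Fintype F] (k : ℕ)
    (g : Fin k → Polynomial F) (b : Fin k → ℕ)
    (hmonic : ∀ i, (g i).Monic) (hirr : ∀ i, Irreducible (g i))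
    (hg0 : ∀ i, (g i).coeff 0 ≠ 0) (hdist : Function.Injective g)
    (hb : ∀ i, 1 ≤ b i)
    (s : Fin k → (ℕ → F)) (hs : ∀ i, s i ∈ OmegaSet ((g i) ^ (b i)))
    (e : Fin k → ℕ) (he : ∀ i, IsLeastPeriod (s i) (e i)) :
    IsLeastPeriod (∑ i, s i) (Finset.univ.lcm e) :=
  stmt3_general k g b hmonic hirr hdist s hs e he
end

section
/- Let g ∈ F_q[X] be monic irreducible with g(0) ≠ 0, and let s be a periodic sequence over F_q with minimal polynomial h (h monic, h(0) ≠ 0). Then the minimal polynomial of the sequence g(L) s equals h/g if g divides h, and equals h if g does not divide h. -/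
open Polynomial

/-! A polynomial `f` annihilates `g(L) s` exactly when `f g` annihilates `s`, i.e. when
`h ∣ f g`. If `h = g k` this cancels to `k ∣ f`; if `g ∤ h`, irreducibility makes `g` coprime
to `h`, so `h ∣ f`. -/

theorem polyL_mul {F : Type*} [CommSemiring F] (a b : F[X]) :
    polyL (a * b) = polyL a * polyL b :=
  map_mul _ a b

theorem polyL_polyL_apply {F : Type*} [CommSemiring F] (a b : F[X]) (t : ℕ → F) :
    polyL a (polyL b t) = polyL (a * b) t := by
  rw [polyL_mul, Module.End.mul_apply]

namespace IsMinPolyOfSeq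

variable {F : Type*} [CommSemiring F] {s : ℕ → F} {h : F[X]}

theorem polyL_polyL_eq_zero_iff (hmin : IsMinPolyOfSeq s h) (a b : F[X]) :
    polyL a (polyL b s) = 0 ↔ h ∣ a * b := by
  refine ⟨fun ha => hmin.2.2 _ (by rwa [← polyL_polyL_apply]), fun ⟨c, hc⟩ => ?_⟩
  rw [polyL_polyL_apply, hc, mul_comm, polyL_mul, Module.End.mul_apply, hmin.2.1, map_zero]

theorem polyL_of_isCoprime {g : F[X]} (hmin : IsMinPolyOfSeq s h) (hcop : IsCoprime g h) :
    IsMinPolyOfSeq (polyL g s) h :=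
  ⟨hmin.1, (hmin.polyL_polyL_eq_zero_iff h g).2 (dvd_mul_right h g),
    fun a ha => hcop.symm.dvd_of_dvd_mul_right ((hmin.polyL_polyL_eq_zero_iff a g).1 ha)⟩

end IsMinPolyOfSeq

theorem IsMinPolyOfSeq.polyL_of_mul {F : Type*} [CommRing F] [IsDomain F] {s : ℕ → F}
    {g k : F[X]} (hg : g.Monic) (hmin : IsMinPolyOfSeq s (g * k)) :
    IsMinPolyOfSeq (polyL g s) k := by
  have hcancel (a : F[X]) : polyL a (polyL g s) = 0 ↔ k ∣ a := by
    rw [hmin.polyL_polyL_eq_zero_iff, mul_comm a, mul_dvd_mul_iff_left hg.ne_zero]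
  exact ⟨hg.of_mul_monic_left hmin.1, (hcancel k).2 dvd_rfl, fun a => (hcancel a).1⟩

theorem stmt8_general {F : Type*} [Field F]
    (g : Polynomial F) (hmonic : g.Monic) (hirr : Irreducible g)
    (s : ℕ → F)
    (h : Polynomial F) (hmin : IsMinPolyOfSeq s h) :
    (g ∣ h → IsMinPolyOfSeq (polyL g s) (h / g)) ∧
    (¬ g ∣ h → IsMinPolyOfSeq (polyL g s) h) := by
  constructor
  · rintro ⟨k, rfl⟩
    rw [mul_div_cancel_left₀ k hmonic.ne_zero]
    exact hmin.polyL_of_mul hmonic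
  · intro hndvd
    exact hmin.polyL_of_isCoprime ((hirr.isCoprime_or_dvd h).resolve_right hndvd)

/-- for `s` periodic with minimal polynomial `h` (monic, `h(0) ≠ 0`), the
minimal polynomial of `g(L)s` is `h/g` if `g ∣ h`, and `h` otherwise. -/
theorem stmt8 {F : Type*} [Field F] [Fintype F]
    (g : Polynomial F) (hmonic : g.Monic) (hirr : Irreducible g) (hg0 : g.coeff 0 ≠ 0)
    (s : ℕ → F) (hper : ∃ N : ℕ, 0 < N ∧ ∀ i, s (i + N) = s i)
    (h : Polynomial F) (hh0 : h.coeff 0 ≠ 0) (hmin : IsMinPolyOfSeq s h) :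
    (g ∣ h → IsMinPolyOfSeq (polyL g s) (h / g)) ∧
    (¬ g ∣ h → IsMinPolyOfSeq (polyL g s) h) :=
  stmt8_general g hmonic hirr s h hmin
end

section
/- Let F_q have characteristic p, let g ∈ F_q[X] be monic irreducible with g(0) ≠ 0, and let r ≥ 1 be an integer that is not a power of p. Let s be a sequence with minimal polynomial g^{r+1}, and let s_1 ≠ s_2 be two distinct sequences in Ω(g). Then s + s_1 and s + s_2 are shift inequivalent, i.e., there is no ℓ ≥ 0 with s + s_1 = L^ℓ(s + s_2). -/
open Polynomial

lemma polyL_mul_apply_s9 {F : Type*} [CommSemiring F] (f h : Polynomial F) (s : ℕ → F) :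
    polyL (f * h) s = polyL f (polyL h s) := by
  simp [polyL, map_mul, Module.End.mul_apply]

lemma polyL_dvd_ann {F : Type*} [CommSemiring F] {f h : Polynomial F} {s : ℕ → F}
    (h0 : polyL f s = 0) (hd : f ∣ h) : polyL h s = 0 := by
  obtain ⟨c, rfl⟩ := hd
  rw [mul_comm, polyL_mul_apply_s9, h0, map_zero]

lemma polyL_X_pow_sub_one {F : Type*} [CommRing F] (ℓ : ℕ) (s : ℕ → F) :
    polyL ((X : Polynomial F) ^ ℓ - 1) s = (shiftL F ^ ℓ) s - s := by
  simp [polyL, map_sub, map_pow, Module.End.one_apply, LinearMap.sub_apply]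

/-- if `r ≥ 1` is not a power of `p`, `s` has minimal polynomial `g^{r+1}`,
and `s₁ ≠ s₂` are in `Ω(g)`, then `s + s₁` and `s + s₂` are shift inequivalent. -/
theorem stmt9 {F : Type*} [Field F] [Fintype F] (p : ℕ) (hp : p.Prime) [CharP F p]
    (g : Polynomial F) (hmonic : g.Monic) (hirr : Irreducible g) (hg0 : g.coeff 0 ≠ 0)
    (r : ℕ) (hr : 1 ≤ r) (hrp : ¬ ∃ d : ℕ, r = p ^ d)
    (s : ℕ → F) (hs : IsMinPolyOfSeq s (g ^ (r + 1)))
    (s₁ s₂ : ℕ → F) (hs₁ : s₁ ∈ OmegaSet g) (hs₂ : s₂ ∈ OmegaSet g) (hne : s₁ ≠ s₂) :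
    ¬ ∃ ℓ : ℕ, s + s₁ = (shiftL F ^ ℓ) (s + s₂) := by
  rintro ⟨ℓ, hℓ⟩
  haveI : Fact p.Prime := ⟨hp⟩
  have hprime : Prime g := hirr.prime
  rcases Nat.eq_zero_or_pos ℓ with h0 | hposℓ
  · subst h0
    simp only [pow_zero, Module.End.one_apply] at hℓ
    exact hne (add_left_cancel hℓ)
  -- basic algebra from the shift relation
  set A : Module.End F (ℕ → F) := shiftL F ^ ℓ with hAdef
  have hℓ' : s + s₁ = A s + A s₂ := by rw [hℓ, map_add]
  have key1 : polyL ((X : Polynomial F) ^ ℓ - 1) s = s₁ - A s₂ := by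
    rw [polyL_X_pow_sub_one, ← hAdef]
    linear_combination -hℓ'
  have hA : ∀ t : ℕ → F, A t = polyL ((X : Polynomial F) ^ ℓ) t := by
    intro t; simp [polyL, map_pow, hAdef]
  -- g * (X^ℓ - 1) annihilates s
  have hann : polyL (g * ((X : Polynomial F) ^ ℓ - 1)) s = 0 := by
    rw [polyL_mul_apply_s9, key1, map_sub, hs₁]
    have : polyL g (A s₂) = 0 := by
      rw [hA, ← polyL_mul_apply_s9, mul_comm, polyL_mul_apply_s9, hs₂, map_zero]
    rw [this, sub_zero]
  have hdvd1 : g ^ (r + 1) ∣ g * ((X : Polynomial F) ^ ℓ - 1) := hs.2.2 _ hann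
  have hgr : g ^ r ∣ (X : Polynomial F) ^ ℓ - 1 := by
    rw [pow_succ', mul_dvd_mul_iff_left hprime.ne_zero] at hdvd1
    exact hdvd1
  -- factor ℓ = p^k * m with p ∤ m
  set k : ℕ := ℓ.factorization p with hk
  set m : ℕ := ℓ / p ^ k with hm
  have hℓeq : p ^ k * m = ℓ := Nat.ordProj_mul_ordCompl_eq_self ℓ p
  have hpm : ¬ p ∣ m := Nat.not_dvd_ordCompl hp hposℓ.ne'
  have hXsplit : (X : Polynomial F) ^ ℓ - 1 = ((X : Polynomial F) ^ m - 1) ^ p ^ k := by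
    rw [sub_pow_char_pow, one_pow, ← pow_mul, mul_comm m, hℓeq]
  have hsq : Squarefree ((X : Polynomial F) ^ m - 1) := by
    have hmF : (m : F) ≠ 0 := by
      rw [Ne, CharP.cast_eq_zero_iff F p]; exact hpm
    have := Polynomial.separable_X_pow_sub_C (1 : F) hmF one_ne_zero
    rw [map_one] at this
    exact this.squarefree
  have hgm : g ∣ (X : Polynomial F) ^ m - 1 := by
    refine hprime.dvd_of_dvd_pow (n := p ^ k) ?_
    rw [← hXsplit]
    exact dvd_trans (dvd_pow_self g (by omega)) hgr
  -- r ≤ p^k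
  have hrle : r ≤ p ^ k := by
    by_contra hlt
    push_neg at hlt
    obtain ⟨u, hu⟩ := hgm
    have h2 : g ^ (p ^ k + 1) ∣ g ^ (p ^ k) * u ^ (p ^ k) := by
      refine dvd_trans (pow_dvd_pow g hlt) ?_
      rw [← mul_pow, ← hu, ← hXsplit]
      exact hgr
    rw [pow_succ', mul_comm (g ^ p ^ k) (u ^ p ^ k),
      mul_dvd_mul_iff_right (pow_ne_zero _ hprime.ne_zero)] at h2
    have hgu : g ∣ u := hprime.dvd_of_dvd_pow h2
    obtain ⟨v, hv⟩ := hgu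
    have : g * g ∣ (X : Polynomial F) ^ m - 1 := ⟨v, by rw [hu, hv]; ring⟩
    exact hirr.not_isUnit (hsq g this)
  have hrlt : r < p ^ k := lt_of_le_of_ne hrle (fun h => hrp ⟨k, h⟩)
  -- hence g^{r+1} divides X^ℓ - 1
  have hdvd2 : g ^ (r + 1) ∣ (X : Polynomial F) ^ ℓ - 1 := by
    rw [hXsplit]
    exact dvd_trans (pow_dvd_pow g hrlt) (pow_dvd_pow_of_dvd hgm _)
  have hzero : polyL ((X : Polynomial F) ^ ℓ - 1) s = 0 := polyL_dvd_ann hs.2.1 hdvd2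
  have hs1eq : s₁ = A s₂ := by
    have h := key1
    rw [hzero] at h
    exact sub_eq_zero.mp h.symm
  have hAs2 : A s₂ = s₂ := by
    have hz2 : polyL ((X : Polynomial F) ^ ℓ - 1) s₂ = 0 :=
      polyL_dvd_ann hs₂ (dvd_trans (dvd_pow_self g (by omega)) hdvd2)
    rw [polyL_X_pow_sub_one] at hz2
    have := sub_eq_zero.mp hz2
    exact this
  exact hne (by rw [hs1eq, hAs2])
end

section
/- Let F_q have characteristic p, let g ∈ F_q[X] be monic irreducible with g(0) ≠ 0, and let r ≥ 1 be an integer that is not a power of p. Let u be a sequence with minimal polynomial g^r. Then every sequence s satisfying g(L) s = u has minimal polynomial g^{r+1}, and any two distinct sequences s ≠ s'' satisfying g(L) s = g(L) s'' = u are shift inequivalent. -/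
open Polynomial

section Helpers

variable {F : Type*} [Field F]

lemma polyL_mul' (f h : Polynomial F) (s : ℕ → F) :
    polyL (f * h) s = polyL f (polyL h s) := by
  simp [polyL, map_mul, Module.End.mul_apply]

lemma polyL_of_dvd {f h : Polynomial F} (hd : f ∣ h) {s : ℕ → F}
    (hs : polyL f s = 0) : polyL h s = 0 := by
  obtain ⟨c, rfl⟩ := hd
  rw [mul_comm, polyL_mul', hs, map_zero]

lemma polyL_pow_X (ℓ : ℕ) (s : ℕ → F) :
    polyL (X ^ ℓ) s = (shiftL F ^ ℓ) s := by
  simp [polyL, map_pow]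

lemma polyL_sub' (f h : Polynomial F) (s : ℕ → F) :
    polyL (f - h) s = polyL f s - polyL h s := by
  simp [polyL, map_sub]

lemma polyL_add' (f h : Polynomial F) (s : ℕ → F) :
    polyL (f + h) s = polyL f s + polyL h s := by
  simp [polyL, map_add]

lemma polyL_one' (s : ℕ → F) : polyL (1 : Polynomial F) s = s := by
  simp [polyL]

end Helpers

/-- if `r ≥ 1` is not a power of `p` and `u` has minimal polynomial `g^r`,
then every `s` with `g(L)s = u` has minimal polynomial `g^{r+1}`, and any two distinct
such preimages are shift inequivalent. -/
theorem stmt11 {F : Type*} [Field F] [Fintype F] (p : ℕ) (hp : p.Prime) [CharP F p]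
    (g : Polynomial F) (hmonic : g.Monic) (hirr : Irreducible g) (hg0 : g.coeff 0 ≠ 0)
    (r : ℕ) (hr : 1 ≤ r) (hrp : ¬ ∃ d : ℕ, r = p ^ d)
    (u : ℕ → F) (hu : IsMinPolyOfSeq u (g ^ r)) :
    (∀ s : ℕ → F, polyL g s = u → IsMinPolyOfSeq s (g ^ (r + 1))) ∧
    (∀ s s'' : ℕ → F, polyL g s = u → polyL g s'' = u → s ≠ s'' →
      ¬ ShiftEquiv s s'') := by
  classical
  have hprime : Prime g := hirr.prime
  have hgne : g ≠ 0 := hprime.ne_zero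
  have hgnu : ¬ IsUnit g := hprime.not_unit
  have hdeg : 0 < g.natDegree := hirr.natDegree_pos
  -- any annihilator of u is divisible by g^r
  have hu_ann : polyL (g ^ r) u = 0 := hu.2.1
  -- key: g^(r+1) annihilates any preimage s
  have main : ∀ s : ℕ → F, polyL g s = u → IsMinPolyOfSeq s (g ^ (r + 1)) := by
    intro s hs
    have hann : polyL (g ^ (r + 1)) s = 0 := by
      rw [pow_succ, polyL_mul', hs, hu_ann]
    refine ⟨hmonic.pow _, hann, ?_⟩
    intro h' hh'
    -- gcd argument
    set d := EuclideanDomain.gcd h' (g ^ (r + 1)) with hd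
    have hdvd1 : d ∣ h' := EuclideanDomain.gcd_dvd_left _ _
    have hdvd2 : d ∣ g ^ (r + 1) := EuclideanDomain.gcd_dvd_right _ _
    have hdann : polyL d s = 0 := by
      rw [hd, EuclideanDomain.gcd_eq_gcd_ab h' (g ^ (r + 1))]
      rw [polyL_add', mul_comm h' _, mul_comm (g ^ (r+1)) _,
        polyL_mul', polyL_mul', hh', hann, map_zero, map_zero, add_zero]
    obtain ⟨k, hk, hassoc⟩ := (dvd_prime_pow hprime (r + 1)).mp hdvd2
    have hgk : polyL (g ^ k) s = 0 := polyL_of_dvd hassoc.dvd hdann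
    -- k ≤ r is impossible
    have hk' : k = r + 1 := by
      by_contra hne
      have hkr : k ≤ r := by omega
      have hgr : polyL (g ^ r) s = 0 := polyL_of_dvd (pow_dvd_pow g hkr) hgk
      have hur : polyL (g ^ (r - 1)) u = 0 := by
        rw [← hs, ← polyL_mul', ← pow_succ, Nat.sub_add_cancel hr]
        exact hgr
      have hdd := hu.2.2 _ hur
      have : (g ^ r).natDegree ≤ (g ^ (r - 1)).natDegree :=
        natDegree_le_of_dvd hdd (pow_ne_zero _ hgne)
      rw [natDegree_pow, natDegree_pow] at this
      have : r ≤ r - 1 := Nat.le_of_mul_le_mul_right this hdeg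
      omega
    subst hk'
    exact hassoc.symm.dvd.trans hdvd1
  refine ⟨main, ?_⟩
  intro s s'' hs hs'' hne ⟨ℓ, hℓ⟩
  rcases Nat.eq_zero_or_pos ℓ with rfl | hℓpos
  · exact hne (by simpa using hℓ.symm)
  -- u is ℓ-periodic
  have hXu : polyL (X ^ ℓ - 1) u = 0 := by
    have h1 : polyL (X ^ ℓ) u = u := by
      conv_lhs => rw [← hs]
      rw [← polyL_mul', mul_comm (X ^ ℓ) g, polyL_mul', polyL_pow_X, ← hℓ, hs'']
    rw [polyL_sub', h1, polyL_one', sub_self]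
  have hgrdvd : g ^ r ∣ X ^ ℓ - 1 := hu.2.2 _ hXu
  -- factor ℓ = p^a * m with p ∤ m
  set a := ℓ.factorization p with ha
  set m := ℓ / p ^ a with hm
  have hℓeq : p ^ a * m = ℓ := Nat.ordProj_mul_ordCompl_eq_self ℓ p
  have hpm : ¬ p ∣ m := Nat.not_dvd_ordCompl hp (by omega)
  have hm0 : m ≠ 0 := by
    intro h; rw [h, mul_zero] at hℓeq; omega
  haveI : Fact p.Prime := ⟨hp⟩
  have hfactor : X ^ ℓ - 1 = (X ^ m - 1 : Polynomial F) ^ p ^ a := by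
    rw [sub_pow_char_pow, ← pow_mul, one_pow, mul_comm m, hℓeq]
  -- X^m - 1 is squarefree
  have hsqf : Squarefree (X ^ m - 1 : Polynomial F) := by
    have hmF : (m : F) ≠ 0 := by
      rw [Ne, CharP.cast_eq_zero_iff F p m]; exact hpm
    have := separable_X_pow_sub_C (1 : F) hmF one_ne_zero
    rw [map_one] at this
    exact this.squarefree
  -- g divides X^m - 1 exactly once, so r ≤ p^a, and r < p^a since r isn't a p-power
  have hgrdvd' : g ^ r ∣ (X ^ m - 1 : Polynomial F) ^ p ^ a := by
    rw [← hfactor]; exact hgrdvd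
  have hgdvd : g ∣ X ^ m - 1 := by
    have : g ∣ (X ^ m - 1 : Polynomial F) ^ p ^ a :=
      dvd_trans (dvd_pow_self g (by omega)) hgrdvd'
    exact hprime.dvd_of_dvd_pow this
  obtain ⟨c, hc⟩ := hgdvd
  have hgc : ¬ g ∣ c := by
    intro hdc
    obtain ⟨e, he⟩ := hdc
    have : g * g ∣ X ^ m - 1 := ⟨e, by rw [hc, he, mul_assoc]⟩
    exact hgnu (hsqf g this)
  have hrpa : g ^ r ∣ g ^ p ^ a := by
    have h1 : g ^ r ∣ g ^ p ^ a * c ^ p ^ a := by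
      rw [← mul_pow, ← hc]; exact hgrdvd'

    exact hprime.pow_dvd_of_dvd_mul_right _ (fun h => hgc (hprime.dvd_of_dvd_pow h)) h1
  have hrle : r ≤ p ^ a := (pow_dvd_pow_iff hgne hgnu).mp hrpa
  have hrlt : r < p ^ a := lt_of_le_of_ne hrle (fun h => hrp ⟨a, h⟩)
  -- hence g^(r+1) divides X^ℓ - 1, so s is ℓ-periodic, contradiction
  have hg1dvd : g ^ (r + 1) ∣ X ^ ℓ - 1 := by
    refine dvd_trans (pow_dvd_pow g hrlt) ?_
    rw [hfactor, hc, mul_pow]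
    exact dvd_mul_right _ _
  have hminS := main s hs
  have hXs : polyL (X ^ ℓ - 1) s = 0 := polyL_of_dvd hg1dvd hminS.2.1
  rw [polyL_sub', polyL_pow_X, polyL_one', sub_eq_zero] at hXs
  exact hne (by rw [hℓ, hXs])
end

section
/- Let g_1 ≠ g_2 be distinct monic irreducible polynomials in F_q[X] with nonzero constant terms and let b_1, b_2 ≥ 1. Let u_1, u_1' ∈ Ω(g_1^{b_1}) and u_2, u_2' ∈ Ω(g_2^{b_2}), and let ℓ_1, ℓ_2, ℓ_1', ℓ_2' ≥ 0. If L^{ℓ_1} u_1 + L^{ℓ_2} u_2 = L^{ℓ_1'} u_1' + L^{ℓ_2'} u_2', then L^{ℓ_1} u_1 = L^{ℓ_1'} u_1' and L^{ℓ_2} u_2 = L^{ℓ_2'} u_2'. Consequently, if u_1 and u_1' are shift inequivalent, or u_2 and u_2' are shift inequivalent, then u_1 + L^{a} u_2 and u_1' + L^{b} u_2' are shift inequivalent for all a, b ≥ 0. -/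
open Polynomial

/-! The difference of two decompositions `L^{ℓ₁} u₁ - L^{ℓ₁'} u₁' = L^{ℓ₂'} u₂' - L^{ℓ₂} u₂`
lies in `Ω(g₁^{b₁}) ∩ Ω(g₂^{b₂})`, which is zero because the two polynomials are coprime.
For the second part, a shift `L^ℓ` carrying `u₁ + L^a u₂` to `u₁' + L^b u₂'` therefore splits
into `L^ℓ u₁ = u₁'` and `L^{ℓ+a} u₂ = L^b u₂'`. The latter already makes `u₂` and `u₂'` shift
equivalent, because `u₂'` is periodic: as `g₂(0) ≠ 0`, `X` is a unit of the finite ring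
`F[X]/(g₂^{b₂})`, so `g₂^{b₂} ∣ X^N - 1` for some `N > 0`. -/

section ShiftOperator

variable {F : Type*} [Field F]

lemma omegaSet_eq_ker (f : F[X]) : OmegaSet f = LinearMap.ker (polyL f) := rfl

lemma commute_polyL_shiftL_pow (f : F[X]) (k : ℕ) : Commute (polyL f) (shiftL F ^ k) := by
  simpa [polyL] using (Commute.all f (X ^ k)).map (aeval (shiftL F))

lemma shiftL_pow_mem_omegaSet {f : F[X]} {s : ℕ → F} (hs : s ∈ OmegaSet f) (k : ℕ) :
    (shiftL F ^ k) s ∈ OmegaSet f := by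
  change polyL f ((shiftL F ^ k) s) = 0
  rw [← Module.End.mul_apply, (commute_polyL_shiftL_pow f k).eq, Module.End.mul_apply, hs,
    map_zero]

lemma eq_zero_of_mem_omegaSet_of_isCoprime {f g : F[X]} (hfg : IsCoprime f g) {s : ℕ → F}
    (hf : s ∈ OmegaSet f) (hg : s ∈ OmegaSet g) : s = 0 :=
  (Submodule.disjoint_def.1 (disjoint_ker_aeval_of_isCoprime (shiftL F) hfg)) s hf hg

lemma eq_and_eq_of_add_eq_add_of_isCoprime {f g : F[X]} (hfg : IsCoprime f g)
    {u u' v v' : ℕ → F} (hu : u ∈ OmegaSet f) (hu' : u' ∈ OmegaSet f)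
    (hv : v ∈ OmegaSet g) (hv' : v' ∈ OmegaSet g) (h : u + v = u' + v') : u = u' ∧ v = v' := by
  have hdiff : u - u' = v' - v := by rw [sub_eq_sub_iff_add_eq_add, h, add_comm]
  rw [omegaSet_eq_ker] at hu hu' hv hv'
  have hzero : u - u' = 0 := eq_zero_of_mem_omegaSet_of_isCoprime hfg (sub_mem hu hu')
    (hdiff ▸ sub_mem hv' hv)
  exact ⟨sub_eq_zero.1 hzero, (sub_eq_zero.1 (hdiff ▸ hzero)).symm⟩

lemma mem_omegaSet_of_dvd {f g : F[X]} (hfg : f ∣ g) {s : ℕ → F} (hs : s ∈ OmegaSet f) :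
    s ∈ OmegaSet g := by
  obtain ⟨c, rfl⟩ := hfg
  change aeval (shiftL F) (f * c) s = 0
  rw [mul_comm, map_mul, Module.End.mul_apply, show aeval (shiftL F) f s = 0 from hs, map_zero]

lemma shiftL_pow_eq_self_of_dvd {f : F[X]} {N : ℕ} (hdvd : f ∣ X ^ N - 1) {s : ℕ → F}
    (hs : s ∈ OmegaSet f) : (shiftL F ^ N) s = s := by
  simpa [OmegaSet, polyL, sub_eq_zero] using mem_omegaSet_of_dvd hdvd hs

end ShiftOperator

lemma Polynomial.exists_pos_dvd_X_pow_sub_one {F : Type*} [Field F] [Finite F] {f : F[X]}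
    (hf : f.Monic) (h0 : f.coeff 0 ≠ 0) : ∃ N, 0 < N ∧ f ∣ X ^ N - 1 := by
  have : Module.Finite F (AdjoinRoot f) := hf.finite_adjoinRoot
  have : Finite (AdjoinRoot f) := Module.finite_of_finite F
  obtain ⟨a, b, hab⟩ : IsCoprime X f :=
    (irreducible_X.coprime_iff_not_dvd).2 (X_dvd_iff.not.2 h0)
  have hroot : IsUnit (AdjoinRoot.root f) := by
    refine IsUnit.of_mul_eq_one_right (AdjoinRoot.mk f a) ?_
    simpa using congrArg (AdjoinRoot.mk f) hab
  obtain ⟨N, hN, hpow⟩ := (isOfFinOrder_of_finite hroot.unit).exists_pow_eq_one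
  refine ⟨N, hN, ?_⟩
  rw [← AdjoinRoot.mk_eq_zero, map_sub, map_pow, AdjoinRoot.mk_X, map_one, sub_eq_zero]
  simpa [Units.ext_iff] using hpow

lemma exists_pos_shiftL_pow_eq_self {F : Type*} [Field F] [Finite F] {f : F[X]} (hf : f.Monic)
    (h0 : f.coeff 0 ≠ 0) {s : ℕ → F} (hs : s ∈ OmegaSet f) :
    ∃ N, 0 < N ∧ (shiftL F ^ N) s = s := by
  obtain ⟨N, hN, hdvd⟩ := exists_pos_dvd_X_pow_sub_one hf h0
  exact ⟨N, hN, shiftL_pow_eq_self_of_dvd hdvd hs⟩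

lemma shiftEquiv_of_shiftL_pow_eq {F : Type*} [CommSemiring F] {u v : ℕ → F} {N m n : ℕ}
    (hN : 0 < N) (hv : (shiftL F ^ N) v = v) (h : (shiftL F ^ m) u = (shiftL F ^ n) v) :
    ShiftEquiv u v := by
  have hperiodic : (shiftL F ^ (N * n)) v = v := by
    rw [pow_mul, Module.End.pow_apply]
    exact Function.iterate_fixed hv n
  refine ⟨n * (N - 1) + m, ?_⟩
  have hexp : n * (N - 1) + n = N * n := by
    rw [mul_comm N, ← Nat.mul_succ, Nat.succ_eq_add_one, Nat.sub_add_cancel hN]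
  rw [pow_add, Module.End.mul_apply, h, ← Module.End.mul_apply, ← pow_add, hexp, hperiodic]

lemma Polynomial.Monic.isCoprime_of_irreducible_of_ne {F : Type*} [Field F] {g₁ g₂ : F[X]}
    (hm₁ : g₁.Monic) (hm₂ : g₂.Monic) (hirr₁ : Irreducible g₁) (hirr₂ : Irreducible g₂)
    (hne : g₁ ≠ g₂) : IsCoprime g₁ g₂ :=
  hirr₁.coprime_iff_not_dvd.2 fun hdvd =>
    hne (eq_of_monic_of_associated hm₁ hm₂ (hirr₁.associated_of_dvd hirr₂ hdvd))

theorem stmt12_general {F : Type*} [Field F] [Fintype F]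
    (g₁ g₂ : Polynomial F) (hm₁ : g₁.Monic) (hm₂ : g₂.Monic)
    (hirr₁ : Irreducible g₁) (hirr₂ : Irreducible g₂)
    (hg₂0 : g₂.coeff 0 ≠ 0) (hne : g₁ ≠ g₂)
    (b₁ b₂ : ℕ)
    (u₁ u₁' u₂ u₂' : ℕ → F)
    (hu₁ : u₁ ∈ OmegaSet (g₁ ^ b₁)) (hu₁' : u₁' ∈ OmegaSet (g₁ ^ b₁))
    (hu₂ : u₂ ∈ OmegaSet (g₂ ^ b₂)) (hu₂' : u₂' ∈ OmegaSet (g₂ ^ b₂)) :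
    (∀ ℓ₁ ℓ₂ ℓ₁' ℓ₂' : ℕ,
      (shiftL F ^ ℓ₁) u₁ + (shiftL F ^ ℓ₂) u₂
        = (shiftL F ^ ℓ₁') u₁' + (shiftL F ^ ℓ₂') u₂' →
      (shiftL F ^ ℓ₁) u₁ = (shiftL F ^ ℓ₁') u₁' ∧
        (shiftL F ^ ℓ₂) u₂ = (shiftL F ^ ℓ₂') u₂') ∧
    ((¬ ShiftEquiv u₁ u₁' ∨ ¬ ShiftEquiv u₂ u₂') →
      ∀ a b : ℕ, ¬ ShiftEquiv (u₁ + (shiftL F ^ a) u₂) (u₁' + (shiftL F ^ b) u₂')) := by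
  have hcop : IsCoprime (g₁ ^ b₁) (g₂ ^ b₂) :=
    (hm₁.isCoprime_of_irreducible_of_ne hm₂ hirr₁ hirr₂ hne).pow
  have hsplit := fun ℓ₁ ℓ₂ ℓ₁' ℓ₂' =>
    eq_and_eq_of_add_eq_add_of_isCoprime hcop (shiftL_pow_mem_omegaSet hu₁ ℓ₁)
      (shiftL_pow_mem_omegaSet hu₁' ℓ₁') (shiftL_pow_mem_omegaSet hu₂ ℓ₂)
      (shiftL_pow_mem_omegaSet hu₂' ℓ₂')
  refine ⟨hsplit, ?_⟩
  rintro hinequiv a b ⟨ℓ, hℓ⟩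
  obtain ⟨h₁, h₂⟩ := hsplit ℓ (ℓ + a) 0 b <| by
    rw [pow_zero, Module.End.one_apply, hℓ, map_add, pow_add, Module.End.mul_apply]
  have hg₂0' : (g₂ ^ b₂).coeff 0 ≠ 0 := by
    simpa [coeff_zero_eq_eval_zero] using pow_ne_zero b₂ hg₂0
  obtain ⟨N, hN, hper⟩ := exists_pos_shiftL_pow_eq_self (hm₂.pow b₂) hg₂0' hu₂'
  rcases hinequiv with hne₁ | hne₂
  · exact hne₁ ⟨ℓ, by rw [h₁, pow_zero, Module.End.one_apply]⟩
  · exact hne₂ (shiftEquiv_of_shiftL_pow_eq hN hper h₂)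

/-- sums of shifts of sequences from `Ω(g₁^{b₁})` and `Ω(g₂^{b₂})`
(for distinct irreducibles `g₁ ≠ g₂`) are equal only componentwise; consequently shift
inequivalence of a component forces shift inequivalence of the sums. -/
theorem stmt12 {F : Type*} [Field F] [Fintype F]
    (g₁ g₂ : Polynomial F) (hm₁ : g₁.Monic) (hm₂ : g₂.Monic)
    (hirr₁ : Irreducible g₁) (hirr₂ : Irreducible g₂)
    (hg₁0 : g₁.coeff 0 ≠ 0) (hg₂0 : g₂.coeff 0 ≠ 0) (hne : g₁ ≠ g₂)
    (b₁ b₂ : ℕ) (hb₁ : 1 ≤ b₁) (hb₂ : 1 ≤ b₂)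
    (u₁ u₁' u₂ u₂' : ℕ → F)
    (hu₁ : u₁ ∈ OmegaSet (g₁ ^ b₁)) (hu₁' : u₁' ∈ OmegaSet (g₁ ^ b₁))
    (hu₂ : u₂ ∈ OmegaSet (g₂ ^ b₂)) (hu₂' : u₂' ∈ OmegaSet (g₂ ^ b₂)) :
    (∀ ℓ₁ ℓ₂ ℓ₁' ℓ₂' : ℕ,
      (shiftL F ^ ℓ₁) u₁ + (shiftL F ^ ℓ₂) u₂
        = (shiftL F ^ ℓ₁') u₁' + (shiftL F ^ ℓ₂') u₂' →
      (shiftL F ^ ℓ₁) u₁ = (shiftL F ^ ℓ₁') u₁' ∧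
        (shiftL F ^ ℓ₂) u₂ = (shiftL F ^ ℓ₂') u₂') ∧
    ((¬ ShiftEquiv u₁ u₁' ∨ ¬ ShiftEquiv u₂ u₂') →
      ∀ a b : ℕ, ¬ ShiftEquiv (u₁ + (shiftL F ^ a) u₂) (u₁' + (shiftL F ^ b) u₂')) :=
  stmt12_general g₁ g₂ hm₁ hm₂ hirr₁ hirr₂ hg₂0 hne b₁ b₂ u₁ u₁' u₂ u₂' hu₁ hu₁' hu₂ hu₂'
end

section
/- Let u_1 be a nonzero periodic sequence over F_q with least period e_1 and u_2 a nonzero periodic sequence with least period e_2. Then for every ℓ ≥ 0 and every integer κ ≥ 0, the sequences u_1 + L^{ℓ} u_2 and u_1 + L^{ℓ + κ·gcd(e_1, e_2)} u_2 are shift equivalent; indeed, writing v·(e_1/gcd(e_1,e_2)) + w·(e_2/gcd(e_1,e_2)) = 1, one has u_1 + L^{ℓ + κ·gcd(e_1,e_2)} u_2 = L^{κ·v·e_1}(u_1 + L^{ℓ} u_2). -/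
open Polynomial

lemma shift_pow_apply {F : Type*} [CommSemiring F] (s : ℕ → F) (n : ℕ) :
    (shiftL F ^ n) s = fun i => s (i + n) := by
  induction n generalizing s with
  | zero => simp
  | succ n ih =>
    rw [pow_succ, Module.End.mul_apply]
    have : (shiftL F) s = fun i => s (i + 1) := rfl
    rw [this, ih]
    funext i
    simp [Nat.add_assoc]

lemma periodic_mul {F : Type*} [CommSemiring F] (s : ℕ → F) (e : ℕ)
    (hs : ∀ i, s (i + e) = s i) : ∀ k i, s (i + e * k) = s i := by
  intro k
  induction k with
  | zero => simp
  | succ k ih =>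
    intro i
    have : i + e * (k + 1) = (i + e * k) + e := by ring
    rw [this, hs, ih]

lemma shift_eq_of_modEq {F : Type*} [CommSemiring F] (s : ℕ → F) (e : ℕ)
    (hs : ∀ i, s (i + e) = s i) {a b : ℕ} (h : a ≡ b [MOD e]) :
    (shiftL F ^ a) s = (shiftL F ^ b) s := by
  wlog hab : a ≤ b generalizing a b
  · exact (this h.symm (le_of_not_ge hab)).symm
  obtain ⟨k, hk⟩ := (Nat.modEq_iff_dvd' hab).mp h
  have hb : b = a + e * k := by omega
  subst hb
  rw [shift_pow_apply, shift_pow_apply]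
  funext i
  have : i + (a + e * k) = (i + a) + e * k := by ring
  rw [this, periodic_mul s e hs k]

/-- `u₁ + L^ℓ u₂` and `u₁ + L^{ℓ + κ·gcd(e₁,e₂)} u₂` are shift equivalent;
writing `v·(e₁/gcd) + w·(e₂/gcd) = 1` (in `ℤ`), the required shift is `κ·v·e₁`
(interpreted modulo the period `lcm(e₁,e₂)` of the sum). -/
theorem stmt14 {F : Type*} [Field F] [Fintype F]
    (u₁ u₂ : ℕ → F) (hu₁ne : u₁ ≠ 0) (hu₂ne : u₂ ≠ 0)
    (e₁ e₂ : ℕ) (hp₁ : IsLeastPeriod u₁ e₁) (hp₂ : IsLeastPeriod u₂ e₂)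
    (ℓ κ : ℕ) :
    ShiftEquiv (u₁ + (shiftL F ^ ℓ) u₂)
      (u₁ + (shiftL F ^ (ℓ + κ * Nat.gcd e₁ e₂)) u₂) ∧
    (∀ v w : ℤ, v * ((e₁ / Nat.gcd e₁ e₂ : ℕ) : ℤ) + w * ((e₂ / Nat.gcd e₁ e₂ : ℕ) : ℤ) = 1 →
      ∀ a : ℕ, (a : ℤ) ≡ (κ : ℤ) * v * (e₁ : ℤ) [ZMOD (Nat.lcm e₁ e₂ : ℤ)] →
        u₁ + (shiftL F ^ (ℓ + κ * Nat.gcd e₁ e₂)) u₂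
          = (shiftL F ^ a) (u₁ + (shiftL F ^ ℓ) u₂)) := by
  set g := Nat.gcd e₁ e₂ with hg
  set Lm := Nat.lcm e₁ e₂ with hL
  have he₁ : 0 < e₁ := hp₁.1
  have he₂ : 0 < e₂ := hp₂.1
  have hgpos : 0 < g := Nat.gcd_pos_of_pos_left _ he₁
  have hLpos : 0 < Lm := Nat.lcm_pos he₁ he₂
  have key : ∀ v w : ℤ, v * ((e₁ / g : ℕ) : ℤ) + w * ((e₂ / g : ℕ) : ℤ) = 1 →
      ∀ a : ℕ, (a : ℤ) ≡ (κ : ℤ) * v * (e₁ : ℤ) [ZMOD (Lm : ℤ)] →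
        u₁ + (shiftL F ^ (ℓ + κ * g)) u₂
          = (shiftL F ^ a) (u₁ + (shiftL F ^ ℓ) u₂) := by
    intro v w hvw a ha
    -- Bezout scaled by g : v * e₁ + w * e₂ = g
    have hd1 : ((e₁ / g : ℕ) : ℤ) * (g : ℤ) = (e₁ : ℤ) := by
      exact_mod_cast congrArg (Nat.cast : ℕ → ℤ) (Nat.div_mul_cancel (Nat.gcd_dvd_left e₁ e₂))
    have hd2 : ((e₂ / g : ℕ) : ℤ) * (g : ℤ) = (e₂ : ℤ) := by
      exact_mod_cast congrArg (Nat.cast : ℕ → ℤ) (Nat.div_mul_cancel (Nat.gcd_dvd_right e₁ e₂))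
    have hbez : v * (e₁ : ℤ) + w * (e₂ : ℤ) = (g : ℤ) := by
      have := congrArg (· * (g : ℤ)) hvw
      simp only [add_mul, mul_assoc, hd1, hd2, one_mul] at this
      exact this
    have hdvdL : (Lm : ℤ) ∣ (a : ℤ) - (κ : ℤ) * v * (e₁ : ℤ) := Int.ModEq.dvd ha.symm
    have he₁L : (e₁ : ℤ) ∣ (Lm : ℤ) := Int.natCast_dvd_natCast.mpr (Nat.dvd_lcm_left _ _)
    have he₂L : (e₂ : ℤ) ∣ (Lm : ℤ) := Int.natCast_dvd_natCast.mpr (Nat.dvd_lcm_right _ _)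
    -- a ≡ 0 mod e₁
    have h1 : e₁ ∣ a := by
      have : (e₁ : ℤ) ∣ (a : ℤ) := by
        have h' : (e₁ : ℤ) ∣ (a : ℤ) - (κ : ℤ) * v * (e₁ : ℤ) := he₁L.trans hdvdL
        have hx : (e₁ : ℤ) ∣ (κ : ℤ) * v * (e₁ : ℤ) := Dvd.intro_left _ rfl
        have h'' := dvd_add h' hx
        rwa [sub_add_cancel] at h''
      exact_mod_cast this
    -- a ≡ κ * g mod e₂
    have h2 : a ≡ κ * g [MOD e₂] := by
      rw [Nat.modEq_iff_dvd]
      have h' : (e₂ : ℤ) ∣ (a : ℤ) - (κ : ℤ) * v * (e₁ : ℤ) := he₂L.trans hdvdL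
      have h'' : (e₂ : ℤ) ∣ (κ : ℤ) * v * (e₁ : ℤ) - (κ : ℤ) * (g : ℤ) := by
        refine ⟨-(κ : ℤ) * w, by linear_combination (κ : ℤ) * hbez⟩
      push_cast
      have := dvd_add h' h''
      have heq : (a : ℤ) - (κ : ℤ) * v * (e₁ : ℤ) + ((κ : ℤ) * v * (e₁ : ℤ) - (κ : ℤ) * (g : ℤ))
          = (a : ℤ) - (κ : ℤ) * (g : ℤ) := by ring
      rw [heq] at this
      rw [show (a : ℤ) - (κ : ℤ) * (g : ℤ) = -((κ : ℤ) * (g : ℤ) - (a : ℤ)) by ring] at this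
      exact dvd_neg.mp this
    -- now compute
    have hLa : (shiftL F ^ a) u₁ = u₁ := by
      have := shift_eq_of_modEq u₁ e₁ hp₁.2.1 ((Nat.modEq_zero_iff_dvd).mpr h1)
      simpa using this
    have hLb : (shiftL F ^ (a + ℓ)) u₂ = (shiftL F ^ (ℓ + κ * g)) u₂ := by
      apply shift_eq_of_modEq u₂ e₂ hp₂.2.1
      have : a + ℓ ≡ κ * g + ℓ [MOD e₂] := h2.add_right ℓ
      simpa [Nat.add_comm] using this
    rw [map_add]
    have hcomp : (shiftL F ^ a) ((shiftL F ^ ℓ) u₂) = (shiftL F ^ (a + ℓ)) u₂ := by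
      rw [pow_add, Module.End.mul_apply]
    rw [hcomp, hLa, hLb]
  refine ⟨?_, key⟩
  -- construct explicit Bezout coefficients and shift amount
  have hcop : Nat.Coprime (e₁ / g) (e₂ / g) := Nat.coprime_div_gcd_div_gcd hgpos
  set v : ℤ := Nat.gcdA (e₁ / g) (e₂ / g) with hv
  set w : ℤ := Nat.gcdB (e₁ / g) (e₂ / g) with hw
  have hvw : v * ((e₁ / g : ℕ) : ℤ) + w * ((e₂ / g : ℕ) : ℤ) = 1 := by
    have hcop' : Nat.gcd (e₁ / g) (e₂ / g) = 1 := hcop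
    have h := Nat.gcd_eq_gcd_ab (e₁ / g) (e₂ / g)
    rw [hcop'] at h
    simp only [Nat.cast_one] at h
    rw [hv, hw]
    linear_combination -h
  set a : ℕ := ((κ : ℤ) * v * (e₁ : ℤ) % (Lm : ℤ)).toNat with haa
  have hLne : (Lm : ℤ) ≠ 0 := by exact_mod_cast hLpos.ne'
  have ha : (a : ℤ) ≡ (κ : ℤ) * v * (e₁ : ℤ) [ZMOD (Lm : ℤ)] := by
    have hnn : 0 ≤ (κ : ℤ) * v * (e₁ : ℤ) % (Lm : ℤ) := Int.emod_nonneg _ hLne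
    have : (a : ℤ) = (κ : ℤ) * v * (e₁ : ℤ) % (Lm : ℤ) := Int.toNat_of_nonneg hnn
    rw [Int.ModEq, this, Int.emod_emod_of_dvd _ dvd_rfl]
  exact ⟨a, key v w hvw a ha⟩
end
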